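/- Let f, g : ℝ^d → ℝ be convex, differentiable functions with σ_β(x) = min{1, max{0, 1+βx}}, ε > 0, β > 0, and F(w) = σ_β(g(w)−ε)∇g(w) + (1−σ_β(g(w)−ε))∇f(w). Let w* satisfy g(w*) ≤ 0. Then for any w with g(w) ≥ ε, ⟨F(w), w − w*⟩ ≥ g(w) − g(w*) ≥ ε, and for any w with g(w) < ε, ⟨F(w), w − w*⟩ ≥ σ_β(g(w)−ε)(ε − 1/β) + (1−σ_β(g(w)−ε))(f(w) − f(w*)). -/

import Mathlib

/-!
Both bounds come from the first-order characterisation of convexity,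
`f w - f w* ≤ ⟪∇f w, w - w*⟫`, applied to `f` and to `g` and averaged with the weight
`σ_β(g w - ε) ∈ [0, 1]`. If `g w ≥ ε` the weight is `1`; if it is positive then
`g w > ε - 1/β`, which together with `g w* ≤ 0` bounds the `g`-term below by `ε - 1/β`.
-/

open RealInnerProductSpace

theorem ConvexOn.le_sub_of_hasFDerivAt {E : Type*} [NormedAddCommGroup E] [NormedSpace ℝ E]
    {s : Set E} {f : E → ℝ} {f' : E →L[ℝ] ℝ} {x y : E} (hf : ConvexOn ℝ s f)
    (hx : x ∈ s) (hy : y ∈ s) (hfx : HasFDerivAt f f' x) :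
    f' (y - x) ≤ f y - f x := by
  let γ : ℝ →ᵃ[ℝ] E := AffineMap.lineMap x y
  have hsegment : Set.MapsTo γ (Set.Icc 0 1) s :=
    fun _ ht => hf.1.lineMap_mem hx hy ht
  have hconv : ConvexOn ℝ (Set.Icc 0 1) (f ∘ γ) :=
    (hf.comp_affineMap γ).subset hsegment (convex_Icc 0 1)
  have hderiv : HasDerivAt (f ∘ γ) (f' (y - x)) 0 := by
    rw [← AffineMap.lineMap_apply_zero x y (k := ℝ)] at hfx
    exact hfx.comp_hasDerivAt 0 AffineMap.hasDerivAt_lineMap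
  simpa [γ, slope_def_field] using
    hconv.le_slope_of_hasDerivAt (by simp) (by simp) zero_lt_one hderiv

theorem ConvexOn.sub_le_inner_of_hasGradientAt {E : Type*} [NormedAddCommGroup E]
    [InnerProductSpace ℝ E] [CompleteSpace E] {s : Set E} {f : E → ℝ} {f' x y : E}
    (hf : ConvexOn ℝ s f) (hx : x ∈ s) (hy : y ∈ s) (hfx : HasGradientAt f f' x) :
    f x - f y ≤ ⟪f', x - y⟫ := by
  have := hf.le_sub_of_hasFDerivAt hx hy hfx.hasFDerivAt
  rw [InnerProductSpace.toDual_apply_apply, ← neg_sub x y, inner_neg_right] at this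
  linarith

def trimmedHinge (β x : ℝ) : ℝ := min 1 (max 0 (1 + β * x))

namespace trimmedHinge

variable {β x : ℝ}

theorem nonneg (β x : ℝ) : 0 ≤ trimmedHinge β x :=
  le_min zero_le_one (le_max_left _ _)

theorem le_one (β x : ℝ) : trimmedHinge β x ≤ 1 :=
  min_le_left _ _

theorem eq_one_of_nonneg (hβ : 0 ≤ β) (hx : 0 ≤ x) : trimmedHinge β x = 1 :=
  min_eq_left (le_max_of_le_right (by nlinarith))

theorem neg_inv_lt_of_pos (hβ : 0 < β) (hx : 0 < trimmedHinge β x) : -β⁻¹ < x := by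
  have : 0 < 1 + β * x := by
    by_contra! h
    simp [trimmedHinge, max_eq_left h] at hx
  rw [neg_lt_iff_pos_add', ← mul_pos_iff_of_pos_left hβ, mul_add, mul_inv_cancel₀ hβ.ne']
  linarith

end trimmedHinge

theorem soft_switching_inner_bounds_general (d : ℕ)
    (f g : EuclideanSpace ℝ (Fin d) → ℝ)
    (f' g' : EuclideanSpace ℝ (Fin d) → EuclideanSpace ℝ (Fin d))
    (hfconv : ConvexOn ℝ Set.univ f) (hgconv : ConvexOn ℝ Set.univ g)
    (hf : ∀ x, HasGradientAt f (f' x) x)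
    (hg : ∀ x, HasGradientAt g (g' x) x)
    (ε β : ℝ) (hβ : 0 < β)
    (σ : ℝ → ℝ) (hσ : σ = fun x => min 1 (max 0 (1 + β * x)))
    (F : EuclideanSpace ℝ (Fin d) → EuclideanSpace ℝ (Fin d))
    (hF : F = fun w => σ (g w - ε) • g' w + (1 - σ (g w - ε)) • f' w)
    (wstar : EuclideanSpace ℝ (Fin d)) (hws : g wstar ≤ 0) :
    (∀ w, ε ≤ g w → g w - g wstar ≤ ⟪F w, w - wstar⟫ ∧ ε ≤ g w - g wstar) ∧
    (∀ w, g w < ε →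
      σ (g w - ε) * (ε - 1 / β) + (1 - σ (g w - ε)) * (f w - f wstar) ≤
        ⟪F w, w - wstar⟫) := by
  obtain rfl : σ = trimmedHinge β := hσ
  have hinner w : ⟪F w, w - wstar⟫ = trimmedHinge β (g w - ε) * ⟪g' w, w - wstar⟫
      + (1 - trimmedHinge β (g w - ε)) * ⟪f' w, w - wstar⟫ := by
    rw [hF, inner_add_left, real_inner_smul_left, real_inner_smul_left]
  have hgradf w : f w - f wstar ≤ ⟪f' w, w - wstar⟫ :=
    hfconv.sub_le_inner_of_hasGradientAt trivial trivial (hf w)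
  have hgradg w : g w - g wstar ≤ ⟪g' w, w - wstar⟫ :=
    hgconv.sub_le_inner_of_hasGradientAt trivial trivial (hg w)
  refine ⟨fun w hw => ⟨?_, by linarith⟩, fun w _ => ?_⟩
  · rw [hinner, trimmedHinge.eq_one_of_nonneg hβ.le (sub_nonneg.2 hw)]
    simpa using hgradg w
  · set s := trimmedHinge β (g w - ε)
    have hswitch : s * (ε - 1 / β) ≤ s * ⟪g' w, w - wstar⟫ := by
      rcases (trimmedHinge.nonneg β (g w - ε)).eq_or_lt with hs | hs
      · simp [s, ← hs]
      · have := trimmedHinge.neg_inv_lt_of_pos hβ hs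
        exact mul_le_mul_of_nonneg_left (by linarith [hgradg w, one_div β]) hs.le
    have hfall : (1 - s) * (f w - f wstar) ≤ (1 - s) * ⟪f' w, w - wstar⟫ :=
      mul_le_mul_of_nonneg_left (hgradf w) (sub_nonneg.2 (trimmedHinge.le_one β _))
    rw [hinner]
    exact add_le_add hswitch hfall

theorem soft_switching_inner_bounds (d : ℕ)
    (f g : EuclideanSpace ℝ (Fin d) → ℝ)
    (f' g' : EuclideanSpace ℝ (Fin d) → EuclideanSpace ℝ (Fin d))
    (hfconv : ConvexOn ℝ Set.univ f) (hgconv : ConvexOn ℝ Set.univ g)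
    (hf : ∀ x, HasGradientAt f (f' x) x)
    (hg : ∀ x, HasGradientAt g (g' x) x)
    (ε β : ℝ) (hε : 0 < ε) (hβ : 0 < β)
    (σ : ℝ → ℝ) (hσ : σ = fun x => min 1 (max 0 (1 + β * x)))
    (F : EuclideanSpace ℝ (Fin d) → EuclideanSpace ℝ (Fin d))
    (hF : F = fun w => σ (g w - ε) • g' w + (1 - σ (g w - ε)) • f' w)
    (wstar : EuclideanSpace ℝ (Fin d)) (hws : g wstar ≤ 0) :
    (∀ w, ε ≤ g w → g w - g wstar ≤ ⟪F w, w - wstar⟫ ∧ ε ≤ g w - g wstar) ∧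
    (∀ w, g w < ε →
      σ (g w - ε) * (ε - 1 / β) + (1 - σ (g w - ε)) * (f w - f wstar) ≤
        ⟪F w, w - wstar⟫) :=
  soft_switching_inner_bounds_general d f g f' g' hfconv hgconv hf hg ε β hβ σ hσ F hF wstar hws
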